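/- arXiv:2105.14987 — 3 statements merged into one kernel-verified Lean document; each statement's English description precedes it below -/
import Mathlib

section
/- An irreducible square matrix that is weakly diagonally dominant in every row and strictly diagonally dominant in at least one row is invertible (Taussky's theorem). -/
/-!
If `A *ᵥ x = 0` with `x ≠ 0`, look at an index `m` where `‖x‖` is maximal. Row `m` of the equation
together with weak diagonal dominance forces `‖x j‖ = ‖x m‖` for every `j` with `A m j ≠ 0`, so the
maximum propagates along the edges of the graph of `A`, and by irreducibility it is attained at
a strictly dominant row `k`. There the same estimate is strict unless `x k = 0`, hence the
maximum is `0` and `x = 0`.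
-/

open Finset

namespace Matrix

variable {K ι : Type*} [NormedField K] [Fintype ι] [DecidableEq ι] {A : Matrix ι ι K}
  {x : ι → K} {i : ι}

theorem norm_diag_mul_le_of_mulVec_eq_zero (hAx : A *ᵥ x = 0) (i : ι) :
    ‖A i i‖ * ‖x i‖ ≤ ∑ j ∈ univ.erase i, ‖A i j‖ * ‖x j‖ := by
  have hrow : A i i * x i = -∑ j ∈ univ.erase i, A i j * x j := by
    rw [eq_neg_iff_add_eq_zero, add_sum_erase _ (fun j => A i j * x j) (mem_univ i)]
    exact congrFun hAx i
  calc ‖A i i‖ * ‖x i‖ = ‖∑ j ∈ univ.erase i, A i j * x j‖ := by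
        rw [← norm_mul, hrow, norm_neg]
    _ ≤ ∑ j ∈ univ.erase i, ‖A i j * x j‖ := norm_sum_le _ _
    _ = ∑ j ∈ univ.erase i, ‖A i j‖ * ‖x j‖ := by simp_rw [norm_mul]

theorem sum_norm_mul_le_of_forall_norm_le (hmax : ∀ j, ‖x j‖ ≤ ‖x i‖) :
    ∑ j ∈ univ.erase i, ‖A i j‖ * ‖x j‖ ≤ (∑ j ∈ univ.erase i, ‖A i j‖) * ‖x i‖ := by
  rw [sum_mul]
  exact sum_le_sum fun j _ => mul_le_mul_of_nonneg_left (hmax j) (norm_nonneg _)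

theorem norm_eq_of_ne_zero_of_forall_norm_le (hAx : A *ᵥ x = 0)
    (hdom : ∑ j ∈ univ.erase i, ‖A i j‖ ≤ ‖A i i‖) (hmax : ∀ j, ‖x j‖ ≤ ‖x i‖) {j : ι}
    (hij : A i j ≠ 0) : ‖x j‖ = ‖x i‖ := by
  rcases eq_or_ne j i with rfl | hji
  · rfl
  have hle : ∀ k ∈ univ.erase i, ‖A i k‖ * ‖x k‖ ≤ ‖A i k‖ * ‖x i‖ :=
    fun k _ => mul_le_mul_of_nonneg_left (hmax k) (norm_nonneg _)
  have hsum : ∑ k ∈ univ.erase i, ‖A i k‖ * ‖x k‖ = ∑ k ∈ univ.erase i, ‖A i k‖ * ‖x i‖ := by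
    refine le_antisymm (sum_le_sum hle) ?_
    calc ∑ k ∈ univ.erase i, ‖A i k‖ * ‖x i‖
        ≤ ‖A i i‖ * ‖x i‖ := by
          rw [← sum_mul]
          exact mul_le_mul_of_nonneg_right hdom (norm_nonneg _)
      _ ≤ ∑ k ∈ univ.erase i, ‖A i k‖ * ‖x k‖ := norm_diag_mul_le_of_mulVec_eq_zero hAx i
  have hterm := (sum_eq_sum_iff_of_le hle).mp hsum j (mem_erase.mpr ⟨hji, mem_univ j⟩)
  exact mul_left_cancel₀ (norm_ne_zero_iff.mpr hij) hterm

theorem norm_eq_of_reflTransGen_of_forall_norm_le (hAx : A *ᵥ x = 0)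
    (hdom : ∀ i, ∑ j ∈ univ.erase i, ‖A i j‖ ≤ ‖A i i‖) (hmax : ∀ j, ‖x j‖ ≤ ‖x i‖) {j : ι}
    (hij : Relation.ReflTransGen (fun a b => A a b ≠ 0) i j) : ‖x j‖ = ‖x i‖ := by
  induction hij with
  | refl => rfl
  | tail _ hbc ih =>
    rw [← ih]
    exact norm_eq_of_ne_zero_of_forall_norm_le hAx (hdom _) (fun k => ih ▸ hmax k) hbc

theorem eq_zero_of_sum_lt_of_forall_norm_le (hAx : A *ᵥ x = 0)
    (hstrict : ∑ j ∈ univ.erase i, ‖A i j‖ < ‖A i i‖) (hmax : ∀ j, ‖x j‖ ≤ ‖x i‖) :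
    x i = 0 := by
  by_contra hxi
  have hpos : 0 < ‖x i‖ := norm_pos_iff.mpr hxi
  have := calc ‖A i i‖ * ‖x i‖
      ≤ ∑ j ∈ univ.erase i, ‖A i j‖ * ‖x j‖ := norm_diag_mul_le_of_mulVec_eq_zero hAx i
    _ ≤ (∑ j ∈ univ.erase i, ‖A i j‖) * ‖x i‖ := sum_norm_mul_le_of_forall_norm_le hmax
    _ < ‖A i i‖ * ‖x i‖ := mul_lt_mul_of_pos_right hstrict hpos
  exact lt_irrefl _ this

theorem det_ne_zero_of_reflTransGen_sum_row_lt_diag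
    (hdom : ∀ i, ∑ j ∈ univ.erase i, ‖A i j‖ ≤ ‖A i i‖)
    (hchain : ∀ i, ∃ k, Relation.ReflTransGen (fun a b => A a b ≠ 0) i k ∧
      ∑ j ∈ univ.erase k, ‖A k j‖ < ‖A k k‖) :
    A.det ≠ 0 := by
  intro hdet
  obtain ⟨x, hx, hAx⟩ := exists_mulVec_eq_zero_iff.mpr hdet
  obtain ⟨j₀, hj₀⟩ := Function.ne_iff.mp hx
  obtain ⟨m, -, hm⟩ := exists_max_image univ (fun i => ‖x i‖) ⟨j₀, mem_univ j₀⟩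
  have hmax : ∀ j, ‖x j‖ ≤ ‖x m‖ := fun j => hm j (mem_univ j)
  obtain ⟨k, hmk, hk⟩ := hchain m
  have hxk : ‖x k‖ = ‖x m‖ := norm_eq_of_reflTransGen_of_forall_norm_le hAx hdom hmax hmk
  have hxm : ‖x m‖ = 0 := by
    rw [← hxk, eq_zero_of_sum_lt_of_forall_norm_le hAx hk (hxk ▸ hmax), norm_zero]
  exact hj₀ (norm_le_zero_iff.mp (hxm ▸ hmax j₀))

end Matrix

open Finset in
/-- Taussky's theorem: an irreducible square complex matrix that is weakly
diagonally dominant in every row and strictly diagonally dominant in at least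
one row is invertible. Irreducibility is expressed by strong connectivity of
the directed graph with an edge `i → j` whenever `A i j ≠ 0`. -/
theorem taussky_irreducible_diagonally_dominant (n : ℕ)
    (A : Matrix (Fin n) (Fin n) ℂ)
    (hirr : ∀ i j : Fin n, Relation.ReflTransGen (fun a b => A a b ≠ 0) i j)
    (hdom : ∀ i : Fin n, ∑ j ∈ univ.erase i, ‖A i j‖ ≤ ‖A i i‖)
    (hstrict : ∃ i : Fin n, ∑ j ∈ univ.erase i, ‖A i j‖ < ‖A i i‖) :
    IsUnit A := by
  obtain ⟨k, hk⟩ := hstrict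
  rw [Matrix.isUnit_iff_isUnit_det, isUnit_iff_ne_zero]
  exact Matrix.det_ne_zero_of_reflTransGen_sum_row_lt_diag hdom fun i => ⟨k, hirr i k, hk⟩
end

section
/- The m+1+σ vectors v₀, …, v_{m+σ} ∈ ℝ^{4m} defined below are linearly independent and form a basis of the kernel of the 3m×4m cyclic block-bidiagonal matrix B whose j-th block row (acting on the 8 coordinates 4(j−1)−3,…,4(j−1) and 4j−3,…,4j, cyclically) is the 3×8 matrix [[1,0,0,0, 1,0,0,0], [0,0,1,0, 0,1,0,0], [γ_j⁻,γ_j⁻,γ_j⁻,γ_j⁻, −γ_j⁺,−γ_j⁺,−γ_j⁺,−γ_j⁺]]. Here σ = 0 if m is odd and σ = 1 if m is even; in particular dim ker B = m + 1 + σ. -/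
private lemma kb_sum_pair {ι : Type*} [Fintype ι] [DecidableEq ι] (a b : ι) (hab : a ≠ b)
    (x : ι → ℝ) : ∑ p, (if p = a ∨ p = b then (1:ℝ) else 0) * x p = x a + x b := by
  have h : ∀ p, (if p = a ∨ p = b then (1:ℝ) else 0) * x p
      = (if p = a then x p else 0) + (if p = b then x p else 0) := by
    intro p
    by_cases h1 : p = a <;> by_cases h2 : p = b <;> simp_all
  rw [Finset.sum_congr rfl (fun p _ => h p), Finset.sum_add_distrib]
  simp

private lemma kb_sum_pair2 {ι : Type*} [Fintype ι] [DecidableEq ι] (a b : ι) (hab : a ≠ b)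
    (c d : ℝ) (y : ι → ℝ) :
    ∑ k, (if k = a then c else if k = b then d else 0) * y k = c * y a + d * y b := by
  have h : ∀ k, (if k = a then c else if k = b then d else 0) * y k
      = (if k = a then c * y k else 0) + (if k = b then d * y k else 0) := by
    intro k
    by_cases h1 : k = a <;> by_cases h2 : k = b <;> simp_all
  rw [Finset.sum_congr rfl (fun p _ => h p), Finset.sum_add_distrib]
  simp

private lemma kb_neg_one_pow (a b : ℕ) (h : Odd (a + b)) : (-1:ℝ)^a = -(-1:ℝ)^b := by
  rcases Nat.even_or_odd a with ha | ha
  · have hb : Odd b := by rcases h with ⟨k, hk⟩; rcases ha with ⟨j, hj⟩; exact ⟨k - j, by omega⟩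
    simp [ha.neg_one_pow, hb.neg_one_pow]
  · have hb : Even b := by rcases h with ⟨k, hk⟩; rcases ha with ⟨j, hj⟩; exact ⟨k - j, by omega⟩
    simp [ha.neg_one_pow, hb.neg_one_pow]

private lemma kb_sub_val (m : ℕ) [NeZero m] (hm2 : 2 ≤ m) (j : Fin m) :
    ((j - 1 : Fin m) : ℕ) = if j.val = 0 then m - 1 else j.val - 1 := by
  have h1 : ((1 : Fin m) : ℕ) = 1 := by
    rw [Fin.val_one']; exact Nat.mod_eq_of_lt (by omega)
  have hd : ((j - 1 : Fin m) : ℕ) = (m - 1 + j.val) % m := by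
    rw [Fin.sub_def]; rw [h1]
  rcases Nat.eq_zero_or_pos j.val with h0 | h0
  · rw [hd, h0, if_pos rfl]
    exact Nat.mod_eq_of_lt (by omega)
  · have hlt : j.val < m := j.isLt
    rw [hd, if_neg (by omega)]
    have e : m - 1 + j.val = (j.val - 1) + m := by omega
    rw [e, Nat.add_mod_right, Nat.mod_eq_of_lt (by omega)]

private lemma kb_parity (m : ℕ) [NeZero m] (hm2 : 2 ≤ m) (hm : Even m) (j : Fin m) :
    (-1 : ℝ) ^ ((j - 1 : Fin m) : ℕ) = -(-1 : ℝ) ^ (j : ℕ) := by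
  apply kb_neg_one_pow
  rw [kb_sub_val m hm2 j]
  rcases hm with ⟨t, ht⟩
  split_ifs with h0
  · exact ⟨t - 1, by omega⟩
  · exact ⟨j.val - 1, by omega⟩

/-- The `m + 1 + σ` vectors `v₀, …, v_{m+σ}` (with `σ = 1` for even `m` and
`σ = 0` for odd `m`) form a basis of the kernel of the cyclic
block-bidiagonal `3m × 4m` matrix `B`; in particular `dim ker B = m + 1 + σ`.
Rows are indexed by `Fin m × Fin 3` (block `j`, row `i`) and columns by
`Fin m × Fin 4` (block `k`, position `l`), with cyclic block indexing. -/
theorem kernel_basis_of_B (m σ : ℕ) [NeZero m] (hm : 3 ≤ m)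
    (hσ : σ = if Even m then 1 else 0)
    (T γm γp : Fin m → ℝ)
    (hT : ∀ j, 0 < T j) (hγm : ∀ j, 0 < γm j) (hγp : ∀ j, 0 < γp j)
    (hcomp : ∀ j : Fin m, T (j - 1) * γm j = T j * γp j)
    (B : Matrix (Fin m × Fin 3) (Fin m × Fin 4) ℝ)
    (hB : ∀ (j k : Fin m) (i : Fin 3) (l : Fin 4), B (j, i) (k, l) =
      if i = 0 then (if (k = j - 1 ∧ l = 0) ∨ (k = j ∧ l = 0) then 1 else 0)
      else if i = 1 then (if (k = j - 1 ∧ l = 2) ∨ (k = j ∧ l = 1) then 1 else 0)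
      else (if k = j - 1 then γm j else if k = j then -γp j else 0))
    (v0 vlast : Fin m × Fin 4 → ℝ) (vcyc : Fin m → Fin m × Fin 4 → ℝ)
    (hv0 : ∀ (k : Fin m) (l : Fin 4), v0 (k, l) = if l = 3 then T k else 0)
    (hvcyc : ∀ (i k : Fin m) (l : Fin 4), vcyc i (k, l) =
      (if k = i - 1 ∧ l = 2 then 1 else 0) - (if k = i - 1 ∧ l = 3 then 1 else 0)
      - (if k = i ∧ l = 1 then 1 else 0) + (if k = i ∧ l = 3 then 1 else 0))
    (hvlast : ∀ (k : Fin m) (l : Fin 4), vlast (k, l) =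
      (-1 : ℝ) ^ (k : ℕ) * ((if l = 0 then 1 else 0) - (if l = 3 then 1 else 0)))
    (f : Fin (m + 1 + σ) → Fin m × Fin 4 → ℝ)
    (hf : ∀ i : Fin (m + 1 + σ), f i =
      if (i : ℕ) = 0 then v0
      else if h : (i : ℕ) - 1 < m then vcyc ⟨(i : ℕ) - 1, h⟩ else vlast) :
    LinearIndependent ℝ f ∧
      Submodule.span ℝ (Set.range f) = LinearMap.ker B.mulVecLin ∧
      Module.finrank ℝ (LinearMap.ker B.mulVecLin) = m + 1 + σ := by
  -- basic Fin facts
  have hσ2 : σ ≤ 1 := by rw [hσ]; split_ifs <;> omega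
  have hsub_ne : ∀ j : Fin m, j - 1 ≠ j := by
    intro j h
    have h2 := sub_eq_self.mp h
    have h1 : ((1 : Fin m) : ℕ) = 1 := by
      rw [Fin.val_one']; exact Nat.mod_eq_of_lt (by omega)
    rw [Fin.ext_iff, h1] at h2
    simp at h2
  have hf0 : ∀ (h : 0 < m), (⟨0, h⟩ : Fin m) = 0 := fun h => rfl
  have hsucc : ∀ (n : ℕ) (h : n + 1 < m), (⟨n, by omega⟩ : Fin m) + 1 = ⟨n + 1, h⟩ := by
    intro n h
    apply Fin.ext
    rw [Fin.val_add, Fin.val_one', Nat.mod_eq_of_lt (show (1:ℕ) < m by omega)]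
    exact Nat.mod_eq_of_lt h
  have hstep : ∀ (n : ℕ) (h : n + 1 < m), (⟨n + 1, h⟩ : Fin m) - 1 = ⟨n, by omega⟩ := by
    intro n h
    rw [← hsucc n h, add_sub_cancel_right]
  have hwrap : (0 : Fin m) - 1 = ⟨m - 1, by omega⟩ := by
    have h : (⟨m - 1, by omega⟩ : Fin m) + 1 = 0 := by
      apply Fin.ext
      rw [Fin.val_add, Fin.val_one', Nat.mod_eq_of_lt (show (1:ℕ) < m by omega)]
      show (m - 1 + 1) % m = 0
      rw [(show m - 1 + 1 = m by omega), Nat.mod_self]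
    rw [← h, add_sub_cancel_right]
  -- row formulas
  have hrow0 : ∀ (x : Fin m × Fin 4 → ℝ) (j : Fin m),
      B.mulVecLin x (j, 0) = x (j - 1, 0) + x (j, 0) := by
    intro x j
    have hB0 : ∀ p : Fin m × Fin 4,
        B (j, 0) p = if p = (j - 1, (0:Fin 4)) ∨ p = (j, (0:Fin 4)) then 1 else 0 := by
      rintro ⟨k, l⟩
      rw [hB]
      simp [Prod.ext_iff]
    show ∑ p, B (j, 0) p * x p = _
    rw [Finset.sum_congr rfl (fun p _ => by rw [hB0 p]),
      kb_sum_pair _ _ (by simp [Prod.ext_iff, hsub_ne j]) x]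
  have hrow1 : ∀ (x : Fin m × Fin 4 → ℝ) (j : Fin m),
      B.mulVecLin x (j, 1) = x (j - 1, 2) + x (j, 1) := by
    intro x j
    have hB1 : ∀ p : Fin m × Fin 4,
        B (j, 1) p = if p = (j - 1, (2:Fin 4)) ∨ p = (j, (1:Fin 4)) then 1 else 0 := by
      rintro ⟨k, l⟩
      rw [hB]
      simp [Prod.ext_iff]
    show ∑ p, B (j, 1) p * x p = _
    rw [Finset.sum_congr rfl (fun p _ => by rw [hB1 p]),
      kb_sum_pair _ _ (by simp [Prod.ext_iff, hsub_ne j]) x]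
  have hrow2 : ∀ (x : Fin m × Fin 4 → ℝ) (j : Fin m),
      B.mulVecLin x (j, 2) = γm j * (∑ l, x (j - 1, l)) - γp j * (∑ l, x (j, l)) := by
    intro x j
    show ∑ p, B (j, 2) p * x p = _
    rw [Fintype.sum_prod_type]
    have h : ∀ k : Fin m, ∑ l : Fin 4, B (j, 2) (k, l) * x (k, l)
        = (if k = j - 1 then γm j else if k = j then -γp j else 0) * (∑ l, x (k, l)) := by
      intro k
      rw [Finset.mul_sum]
      refine Finset.sum_congr rfl (fun l _ => ?_)
      rw [hB]
      simp
    rw [Finset.sum_congr rfl (fun k _ => h k), kb_sum_pair2 _ _ (hsub_ne j)]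
    ring
  -- kernel criterion
  have hker : ∀ x, x ∈ LinearMap.ker B.mulVecLin ↔ ∀ j : Fin m,
      x (j - 1, 0) + x (j, 0) = 0 ∧ x (j - 1, 2) + x (j, 1) = 0 ∧
      γm j * (∑ l, x (j - 1, l)) - γp j * (∑ l, x (j, l)) = 0 := by
    intro x
    rw [LinearMap.mem_ker]
    constructor
    · intro h j
      refine ⟨?_, ?_, ?_⟩
      · rw [← hrow0 x j, h]; rfl
      · rw [← hrow1 x j, h]; rfl
      · rw [← hrow2 x j, h]; rfl
    · intro h
      funext p
      obtain ⟨j, i⟩ := p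
      fin_cases i
      · show B.mulVecLin x (j, 0) = 0
        rw [hrow0 x j]; exact (h j).1
      · show B.mulVecLin x (j, 1) = 0
        rw [hrow1 x j]; exact (h j).2.1
      · show B.mulVecLin x (j, 2) = 0
        rw [hrow2 x j]; exact (h j).2.2
  -- memberships
  have hv0mem : v0 ∈ LinearMap.ker B.mulVecLin := by
    rw [hker]
    intro j
    have hS : ∀ k : Fin m, (∑ l, v0 (k, l)) = T k := by
      intro k
      rw [Fin.sum_univ_four]
      simp [hv0]
    refine ⟨by simp [hv0], by simp [hv0], ?_⟩
    rw [hS, hS]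
    nlinarith [hcomp j]
  have hvcycmem : ∀ i : Fin m, vcyc i ∈ LinearMap.ker B.mulVecLin := by
    intro i
    rw [hker]
    intro j
    have hS : ∀ k : Fin m, (∑ l, vcyc i (k, l)) = 0 := by
      intro k
      rw [Fin.sum_univ_four]
      simp only [hvcyc]
      rcases eq_or_ne k i with h2 | h2
      · subst h2
        simp [(Ne.symm (hsub_ne k) : ¬ k = k - 1)]
      · by_cases h1 : k = i - 1 <;> simp [h1, h2, (show m ≠ 1 by omega)]
    refine ⟨by simp [hvcyc], ?_, by rw [hS, hS]; ring⟩
    have e : j - 1 = i - 1 ↔ j = i := sub_left_inj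
    by_cases h : j = i
    · simp [hvcyc, h]
    · simp [hvcyc, h, e.not.mpr h]
  have hvlastmem : Even m → vlast ∈ LinearMap.ker B.mulVecLin := by
    intro hmE
    rw [hker]
    intro j
    have hS : ∀ k : Fin m, (∑ l, vlast (k, l)) = 0 := by
      intro k
      rw [Fin.sum_univ_four]
      simp [hvlast]
    refine ⟨?_, by simp [hvlast], by rw [hS, hS]; ring⟩
    rw [hvlast, hvlast]
    rw [kb_parity m (by omega) hmE j]
    simp
  -- span ⊆ ker
  have hspan_le : Submodule.span ℝ (Set.range f) ≤ LinearMap.ker B.mulVecLin := by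
    rw [Submodule.span_le]
    rintro _ ⟨i, rfl⟩
    rw [SetLike.mem_coe, hf i]
    split_ifs with h1 h2
    · exact hv0mem
    · exact hvcycmem _
    · -- last vector: only possible when σ = 1, i.e. m even
      apply hvlastmem
      by_contra hodd
      have hσ0 : σ = 0 := by rw [hσ, if_neg hodd]
      have := i.isLt
      omega
  -- linear independence
  have hlin : LinearIndependent ℝ f := by
    rw [Fintype.linearIndependent_iff]
    intro g hg
    have hgc : ∀ p : Fin m × Fin 4, (∑ i, g i * f i p) = 0 := by
      intro p
      have h := congrFun hg p
      simpa using h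
    -- middle coefficients vanish
    have hmid : ∀ i : Fin (m + 1 + σ), (i : ℕ) ≠ 0 → (i : ℕ) - 1 < m → g i = 0 := by
      intro i h1 h2
      set k : Fin m := ⟨(i : ℕ) - 1, h2⟩ with hk
      have hptw : ∀ i' : Fin (m + 1 + σ), g i' * f i' (k, 1)
          = if i' = i then -g i' else 0 := by
        intro i'
        rw [hf i']
        by_cases e0 : (i' : ℕ) = 0
        · have hne : i' ≠ i := fun e => h1 (e ▸ e0)
          rw [if_pos e0, if_neg hne, hv0]
          simp
        · rw [if_neg e0]
          by_cases em : (i' : ℕ) - 1 < m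
          · rw [dif_pos em]
            have hiff : i' = i ↔ (⟨(i' : ℕ) - 1, em⟩ : Fin m) = k := by
              rw [Fin.ext_iff, Fin.ext_iff]
              have := i.isLt
              have := i'.isLt
              simp only [hk]
              constructor <;> intro h <;> omega
            by_cases e : i' = i
            · rw [if_pos e, hiff.mp e, hvcyc]
              simp
            · rw [if_neg e, hvcyc]
              have hne : k ≠ (⟨(i' : ℕ) - 1, em⟩ : Fin m) :=
                fun hkk => e (hiff.mpr hkk.symm)
              simp [hne]
          · rw [dif_neg em]
            have hne : i' ≠ i := fun e => em (by rw [e]; exact h2)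
            rw [if_neg hne, hvlast]
            simp
      have h := hgc (k, 1)
      rw [Finset.sum_congr rfl (fun i' _ => hptw i'),
        Finset.sum_ite_eq' Finset.univ i (fun i' => -g i')] at h
      simpa using h
    -- last coefficient vanishes
    have hlast : ∀ i : Fin (m + 1 + σ), (i : ℕ) ≠ 0 → ¬((i : ℕ) - 1 < m) → g i = 0 := by
      intro i h1 h2
      have hptw : ∀ i' : Fin (m + 1 + σ), g i' * f i' ((0 : Fin m), 0)
          = if i' = i then g i' else 0 := by
        intro i'
        rw [hf i']
        by_cases e0 : (i' : ℕ) = 0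
        · have hne : i' ≠ i := fun e => h1 (e ▸ e0)
          rw [if_pos e0, if_neg hne, hv0]
          simp
        · rw [if_neg e0]
          by_cases em : (i' : ℕ) - 1 < m
          · rw [dif_pos em]
            have hne : i' ≠ i := fun e => h2 (by rw [← e]; exact em)
            rw [if_neg hne, hvcyc]
            simp
          · rw [dif_neg em]
            have he : i' = i := by
              have := i.isLt
              have := i'.isLt
              rw [Fin.ext_iff]
              omega
            rw [if_pos he, hvlast]
            simp
      have h := hgc ((0 : Fin m), 0)
      rw [Finset.sum_congr rfl (fun i' _ => hptw i'),
        Finset.sum_ite_eq' Finset.univ i (fun i' => g i')] at h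
      simpa using h
    -- zeroth coefficient vanishes
    have hzero : ∀ i : Fin (m + 1 + σ), (i : ℕ) = 0 → g i = 0 := by
      intro i h0
      have hptw : ∀ i' : Fin (m + 1 + σ), g i' * f i' ((0 : Fin m), 3)
          = if i' = i then g i' * T 0 else 0 := by
        intro i'
        by_cases e : i' = i
        · rw [if_pos e, hf i', if_pos (by rw [e]; exact h0), hv0]
          simp
        · rw [if_neg e]
          have hne0 : (i' : ℕ) ≠ 0 := by
            intro hc
            exact e (by rw [Fin.ext_iff, hc, h0])
          by_cases em : (i' : ℕ) - 1 < m
          · rw [hmid i' hne0 em]; ring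
          · rw [hlast i' hne0 em]; ring
      have h := hgc ((0 : Fin m), 3)
      rw [Finset.sum_congr rfl (fun i' _ => hptw i'),
        Finset.sum_ite_eq' Finset.univ i (fun i' => g i' * T 0)] at h
      simp at h
      rcases h with h | h
      · exact h
      · exact absurd h (hT 0).ne'
    intro i
    by_cases h0 : (i : ℕ) = 0
    · exact hzero i h0
    · by_cases hm1 : (i : ℕ) - 1 < m
      · exact hmid i h0 hm1
      · exact hlast i h0 hm1
  -- kernel ⊆ span
  have hker_le : LinearMap.ker B.mulVecLin ≤ Submodule.span ℝ (Set.range f) := by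
    intro x hx
    have heq := (hker x).mp hx
    set a : Fin m → ℝ := fun k => -x (k, 1) with ha
    set c : ℝ := x (0, 0) with hc
    set lam : ℝ := (∑ l, x ((0 : Fin m), l)) / T 0 with hlam
    have hak : ∀ k : Fin m, a k = -x (k, 1) := fun _ => rfl
    -- (i)
    have hx0' : ∀ (n : ℕ) (h : n < m), x (⟨n, h⟩, 0) = (-1 : ℝ) ^ n * c := by
      intro n
      induction n with
      | zero => intro h; rw [hf0]; simp [hc]
      | succ n ih =>
        intro h
        have hA := (heq ⟨n + 1, h⟩).1
        rw [hstep n h] at hA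
        rw [ih (by omega)] at hA
        rw [pow_succ]
        linarith
    have hx0 : ∀ k : Fin m, x (k, 0) = (-1 : ℝ) ^ (k : ℕ) * c := by
      intro k
      have h := hx0' k.val k.isLt
      simpa using h
    -- (v)
    have hc0 : ¬ Even m → c = 0 := by
      intro hodd
      have hA := (heq 0).1
      rw [hwrap, hx0' (m - 1) (by omega)] at hA
      have he : (-1 : ℝ) ^ (m - 1) = 1 := by
        apply Even.neg_one_pow
        rcases Nat.even_or_odd m with h | h
        · exact absurd h hodd
        · rcases h with ⟨t, ht⟩; exact ⟨t, by omega⟩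
      rw [he] at hA
      rw [hc]
      linarith
    -- (ii)
    have hS : ∀ k : Fin m, (∑ l, x (k, l)) * T 0 = (∑ l, x ((0 : Fin m), l)) * T k := by
      have key : ∀ (n : ℕ) (h : n < m),
          (∑ l, x (⟨n, h⟩, l)) * T 0 = (∑ l, x ((0 : Fin m), l)) * T ⟨n, h⟩ := by
        intro n
        induction n with
        | zero => intro h; rw [hf0]
        | succ n ih =>
          intro h
          have hC := (heq ⟨n + 1, h⟩).2.2
          have hcj := hcomp ⟨n + 1, h⟩
          rw [hstep n h] at hC hcj
          have ihn := ih (by omega)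
          have key2 : γp ⟨n + 1, h⟩ * ((∑ l, x (⟨n + 1, h⟩, l)) * T 0)
              = γp ⟨n + 1, h⟩ * ((∑ l, x ((0 : Fin m), l)) * T ⟨n + 1, h⟩) := by
            linear_combination (-(T 0)) * hC + γm ⟨n + 1, h⟩ * ihn
              + (∑ l, x ((0 : Fin m), l)) * hcj
          exact mul_left_cancel₀ (hγp ⟨n + 1, h⟩).ne' key2
      intro k
      have h := key k.val k.isLt
      simpa using h
    have hlamS : ∀ k : Fin m, (∑ l, x (k, l)) = lam * T k := by
      intro k
      rw [hlam, div_mul_eq_mul_div, eq_div_iff (hT 0).ne']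
      exact hS k
    -- (iv)
    have hx2 : ∀ k : Fin m, x (k, 2) = -x (k + 1, 1) := by
      intro k
      have hBk := (heq (k + 1)).2.1
      rw [add_sub_cancel_right] at hBk
      linarith
    -- evaluation of the cyclic sum at each coordinate
    have hone_ne : ∀ k : Fin m, k ≠ k + 1 := by
      intro k h
      have h2 := left_eq_add.mp h
      have h1 : ((1 : Fin m) : ℕ) = 1 := by
        rw [Fin.val_one']; exact Nat.mod_eq_of_lt (by omega)
      rw [Fin.ext_iff, h1] at h2
      simp at h2
    have hsum0 : ∀ k : Fin m, (∑ k' : Fin m, a k' * vcyc k' (k, 0)) = 0 := by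
      intro k
      refine Finset.sum_eq_zero (fun k' _ => ?_)
      rw [hvcyc]
      simp
    have hsum1 : ∀ k : Fin m, (∑ k' : Fin m, a k' * vcyc k' (k, 1)) = -a k := by
      intro k
      have hp : ∀ k' : Fin m, a k' * vcyc k' (k, 1) = if k' = k then -a k' else 0 := by
        intro k'
        rw [hvcyc]
        by_cases e : k' = k
        · subst e; simp
        · simp [e, Ne.symm e]
      rw [Finset.sum_congr rfl (fun k' _ => hp k'),
        Finset.sum_ite_eq' Finset.univ k (fun k' => -a k')]
      simp
    have hsum2 : ∀ k : Fin m, (∑ k' : Fin m, a k' * vcyc k' (k, 2)) = a (k + 1) := by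
      intro k
      have hp : ∀ k' : Fin m, a k' * vcyc k' (k, 2) = if k' = k + 1 then a k' else 0 := by
        intro k'
        rw [hvcyc]
        by_cases e : k' = k + 1
        · subst e
          have h1 : k = k + 1 - 1 := by rw [add_sub_cancel_right]
          have h2 : k ≠ k + 1 := hone_ne k
          simp [← h1, h2]
        · have h1 : k ≠ k' - 1 := by
            intro hkk
            exact e (by rw [hkk, sub_add_cancel])
          simp [h1, e]
      rw [Finset.sum_congr rfl (fun k' _ => hp k'),
        Finset.sum_ite_eq' Finset.univ (k + 1) (fun k' => a k')]
      simp
    have hsum3 : ∀ k : Fin m, (∑ k' : Fin m, a k' * vcyc k' (k, 3)) = a k - a (k + 1) := by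
      intro k
      have hp : ∀ k' : Fin m, a k' * vcyc k' (k, 3)
          = (if k' = k then a k' else 0) + (if k' = k + 1 then -a k' else 0) := by
        intro k'
        rw [hvcyc]
        by_cases e1 : k' = k
        · subst e1
          have h1 : k' ≠ k' - 1 := Ne.symm (hsub_ne k')
          have h2 : k' ≠ k' + 1 := hone_ne k'
          simp [h1, h2]
        · by_cases e2 : k' = k + 1
          · subst e2
            have h1 : k = k + 1 - 1 := by rw [add_sub_cancel_right]
            have h2 : k + 1 ≠ k := Ne.symm (hone_ne k)
            simp [← h1, h2, Ne.symm (hone_ne k), (show m ≠ 1 by omega)]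
          · have h1 : k ≠ k' - 1 := by
              intro hkk
              exact e2 (by rw [hkk, sub_add_cancel])
            simp [h1, Ne.symm e1, e1, e2]
      rw [Finset.sum_congr rfl (fun k' _ => hp k'), Finset.sum_add_distrib,
        Finset.sum_ite_eq' Finset.univ k (fun k' => a k'),
        Finset.sum_ite_eq' Finset.univ (k + 1) (fun k' => -a k')]
      simp
      ring
    -- the decomposition
    have hdecomp : x = lam • v0 + (∑ k : Fin m, a k • vcyc k) + c • vlast := by
      have hexp : ∀ (k : Fin m) (l : Fin 4),
          (lam • v0 + (∑ k' : Fin m, a k' • vcyc k') + c • vlast) (k, l)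
          = lam * v0 (k, l) + (∑ k' : Fin m, a k' * vcyc k' (k, l)) + c * vlast (k, l) := by
        intro k l
        simp [Finset.sum_apply]
      have e0 : ∀ k : Fin m, x (k, 0)
          = lam * v0 (k, 0) + (∑ k' : Fin m, a k' * vcyc k' (k, 0)) + c * vlast (k, 0) := by
        intro k
        rw [hv0, hvlast, hsum0, hx0 k]
        simp
        ring
      have e1 : ∀ k : Fin m, x (k, 1)
          = lam * v0 (k, 1) + (∑ k' : Fin m, a k' * vcyc k' (k, 1)) + c * vlast (k, 1) := by
        intro k
        rw [hv0, hvlast, hsum1, hak]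
        simp
      have e2 : ∀ k : Fin m, x (k, 2)
          = lam * v0 (k, 2) + (∑ k' : Fin m, a k' * vcyc k' (k, 2)) + c * vlast (k, 2) := by
        intro k
        rw [hv0, hvlast, hsum2, hak, hx2 k]
        simp
      have e3 : ∀ k : Fin m, x (k, 3)
          = lam * v0 (k, 3) + (∑ k' : Fin m, a k' * vcyc k' (k, 3)) + c * vlast (k, 3) := by
        intro k
        rw [hv0, hvlast, hsum3]
        have hSk := hlamS k
        rw [Fin.sum_univ_four] at hSk
        have hx0k := hx0 k
        have hx2k := hx2 k
        have hakk := hak k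
        have hakk1 := hak (k + 1)
        simp only [show ((3:Fin 4) = 3) = True by simp, if_true,
          show ((3:Fin 4) = 0) = False by simp, if_false]
        linear_combination hSk - hx0k - hx2k - hakk + hakk1
      funext p
      obtain ⟨k, l⟩ := p
      rw [show ((lam • v0 + (∑ k' : Fin m, a k' • vcyc k') + c • vlast) (k, l))
        = lam * v0 (k, l) + (∑ k' : Fin m, a k' * vcyc k' (k, l)) + c * vlast (k, l)
        from hexp k l]
      fin_cases l
      · exact e0 k
      · exact e1 k
      · exact e2 k
      · exact e3 k
    -- conclude membership in the span
    rw [hdecomp]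
    have hmem0 : v0 ∈ Submodule.span ℝ (Set.range f) := by
      apply Submodule.subset_span
      refine ⟨⟨0, by omega⟩, ?_⟩
      rw [hf]
      simp
    have hmemc : ∀ k : Fin m, vcyc k ∈ Submodule.span ℝ (Set.range f) := by
      intro k
      apply Submodule.subset_span
      refine ⟨⟨k.val + 1, by omega⟩, ?_⟩
      rw [hf]
      rw [if_neg (by simp), dif_pos (by simpa using k.isLt)]
      congr 1
    refine Submodule.add_mem _ (Submodule.add_mem _ ?_ ?_) ?_
    · exact Submodule.smul_mem _ _ hmem0
    · exact Submodule.sum_mem _ (fun k _ => Submodule.smul_mem _ _ (hmemc k))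
    · by_cases hE : Even m
      · have hσ1 : σ = 1 := by rw [hσ, if_pos hE]
        apply Submodule.smul_mem
        apply Submodule.subset_span
        refine ⟨⟨m + 1, by omega⟩, ?_⟩
        rw [hf]
        rw [if_neg (by simp), dif_neg (by simp)]
      · rw [hc0 hE, zero_smul]
        exact Submodule.zero_mem _
  -- conclusion
  have hspan : Submodule.span ℝ (Set.range f) = LinearMap.ker B.mulVecLin :=
    le_antisymm hspan_le hker_le
  refine ⟨hlin, hspan, ?_⟩
  rw [← hspan, finrank_span_eq_card hlin]
  simp
end

section
/- Suppose real numbers η_1,…,η_m (cyclic) with η_j ∉ {−1} for all j satisfy λ_j η_{j−1} + c_j η_j + (1−λ_j) η_{j+1} = d_j for all j = 1,…,m, where 0 < λ_j < 1, c_j = 0 and d_j = −1 if η_j = 0, while c_j = 1 + 1/(η_j(1+η_j)) and d_j = 0 if η_j ≠ 0. Then η_j = 0 for all j is impossible: no such solution exists (neither with all η_j ≠ 0, nor with a proper nonempty subset of nonzero entries, nor with all η_j = 0). -/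
/-- No cyclic family `η_1, …, η_m` with `η_j ≠ -1` can satisfy
`λ_j η_{j-1} + c_j η_j + (1-λ_j) η_{j+1} = d_j` for all `j`, where
`c_j = 0`, `d_j = -1` if `η_j = 0` and `c_j = 1 + 1/(η_j(1+η_j))`, `d_j = 0`
otherwise. -/
theorem cyclic_system_no_solution (m : ℕ) [NeZero m] (hm : 3 ≤ m)
    (lam η c d : Fin m → ℝ)
    (hlam : ∀ j, 0 < lam j ∧ lam j < 1)
    (hη : ∀ j, η j ≠ -1)
    (hc : ∀ j, c j = if η j = 0 then 0 else 1 + 1 / (η j * (1 + η j)))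
    (hd : ∀ j, d j = if η j = 0 then -1 else 0)
    (heq : ∀ j : Fin m, lam j * η (j - 1) + c j * η j + (1 - lam j) * η (j + 1) = d j) :
    False := by
  by_cases hz : ∀ j, η j = 0
  · have h0 := heq 0
    rw [hd 0, hc 0, hz 0, hz (0 - 1), hz (0 + 1), if_pos rfl, if_pos rfl] at h0
    norm_num at h0
  · push_neg at hz
    obtain ⟨j₀, hj₀⟩ := hz
    obtain ⟨j, -, hj⟩ := Finset.exists_max_image Finset.univ (fun j => |η j|)
      ⟨j₀, Finset.mem_univ _⟩
    set M := |η j| with hMdef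
    have hM : 0 < M := lt_of_lt_of_le (abs_pos.mpr hj₀) (hj j₀ (Finset.mem_univ _))
    have hηj : η j ≠ 0 := abs_pos.mp hM
    have ht : η j * (1 + η j) ≠ 0 := by
      have : 1 + η j ≠ 0 := fun h => hη j (by linarith)
      exact mul_ne_zero hηj this
    -- |c j| > 1
    have hcj : 1 < |c j| := by
      rw [hc j, if_neg hηj]
      rcases lt_or_gt_of_ne ht with htneg | htpos
      · have h4 : -(1/4 : ℝ) ≤ η j * (1 + η j) := by nlinarith [sq_nonneg (η j + 1/2)]
        have hinv : 1 / (η j * (1 + η j)) ≤ -4 := by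
          rw [div_le_iff_of_neg htneg]; nlinarith
        have : |1 + 1 / (η j * (1 + η j))| = -(1 + 1 / (η j * (1 + η j))) :=
          abs_of_neg (by linarith)
        rw [this]; linarith
      · have hinv : 0 < 1 / (η j * (1 + η j)) := by positivity
        rw [abs_of_pos (by linarith)]; linarith
    have heqj := heq j
    rw [hc j, hd j, if_neg hηj, if_neg hηj] at heqj
    have h1 : (1 + 1 / (η j * (1 + η j))) * η j
        = -(lam j * η (j - 1) + (1 - lam j) * η (j + 1)) := by linarith
    have hlam1 := (hlam j).1
    have hlam2 := (hlam j).2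
    have habs : |(1 + 1 / (η j * (1 + η j))) * η j| ≤ M := by
      rw [h1, abs_neg]
      calc |lam j * η (j - 1) + (1 - lam j) * η (j + 1)|
          ≤ |lam j * η (j - 1)| + |(1 - lam j) * η (j + 1)| := abs_add_le _ _
        _ = lam j * |η (j - 1)| + (1 - lam j) * |η (j + 1)| := by
            rw [abs_mul, abs_mul, abs_of_pos hlam1, abs_of_pos (show (0:ℝ) < 1 - lam j by linarith)]
        _ ≤ lam j * M + (1 - lam j) * M := by
            have h2 := hj (j - 1) (Finset.mem_univ _)
            have h3 := hj (j + 1) (Finset.mem_univ _)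
            have := abs_nonneg (η (j - 1))
            nlinarith
        _ = M := by ring
    rw [abs_mul] at habs
    rw [hc j, if_neg hηj] at hcj
    nlinarith
end
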